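/- If an inner derivation of W(Γ) coincides with a derivation of the form D_φ for an additive group homomorphism φ : Γ → ℂ (i.e., ad_y = D_φ for some y ∈ W(Γ)), then y = 0 and φ = 0; in other words, the sum ad W(Γ) + {D_φ : φ ∈ Hom_ℤ(Γ, ℂ)} inside Der W(Γ) is direct. -/

import Mathlib

/-!
Since `φ 0 = 0`, `y` commutes with every `L_{0,i}`. Reading off the coefficient of
`L_{β,i+j+1}` in `⁅L_{0,i}, y⁆ = 0` gives `β c_{β,j+1} + (j - i) c_{β,j} = 0` for the coordinates
`c` of `y`; taking `i = j` and `i = j + 1` and subtracting yields `c_{β,j} = 0`. Hence `y = 0`,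
and then `φ α • L_{α,0} = 0` forces `φ = 0`.
-/

open Module

section

variable {R L : Type*} [CommRing R] [LieRing L] [LieAlgebra R L] {Γ : AddSubgroup R}

def IsWBasis (B : Basis (Γ × ℕ) R L) : Prop :=
  ∀ (α β : Γ) (i j : ℕ), ⁅B (α, i), B (β, j)⁆ =
    ((β : R) - α) • B (α + β, i + j) + ((j : R) - i) • B (α + β, i + j + 1)

namespace IsWBasis

variable {B : Basis (Γ × ℕ) R L} (hB : IsWBasis B)
include hB

lemma lie_zero_left (i : ℕ) (β : Γ) (j : ℕ) :
    ⁅B (0, i), B (β, j)⁆ = (β : R) • B (β, i + j) + ((j : R) - i) • B (β, i + j + 1) := by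
  simpa using hB 0 β i j

lemma repr_lie_zero_left (i : ℕ) (w : L) (β : Γ) (j : ℕ) :
    B.repr ⁅B (0, i), w⁆ (β, i + j + 1) =
      β * B.repr w (β, j + 1) + ((j : R) - i) * B.repr w (β, j) := by
  suffices (B.coord (β, i + j + 1)).comp (LieAlgebra.ad R L (B (0, i))) =
      (β : R) • B.coord (β, j + 1) + ((j : R) - i) • B.coord (β, j) from
    LinearMap.congr_fun this w
  classical
  refine B.ext fun ⟨α, k⟩ => ?_
  simp only [LinearMap.comp_apply, LieAlgebra.ad_apply, hB.lie_zero_left, map_add, map_smul,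
    Basis.coord_apply, Basis.repr_self, LinearMap.add_apply, LinearMap.smul_apply, smul_eq_mul,
    Finsupp.single_apply, Prod.mk.injEq, add_assoc, Nat.add_left_cancel_iff]
  split_ifs <;> simp_all

lemma eq_zero_of_forall_lie_zero_left {w : L} (hw : ∀ i, ⁅B (0, i), w⁆ = 0) : w = 0 := by
  have hcoeff : ∀ β j, B.repr w (β, j) = 0 := by
    intro β j
    have hj := hB.repr_lie_zero_left j w β j
    have hj1 := hB.repr_lie_zero_left (j + 1) w β j
    simp only [hw, map_zero, Finsupp.coe_zero, Pi.zero_apply, sub_self, zero_mul, add_zero] at hj hj1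
    push_cast at hj1
    linear_combination hj1 - hj
  exact B.ext_elem fun ⟨β, j⟩ => by simpa using hcoeff β j

end IsWBasis

end

theorem stmt10_general (Γ : AddSubgroup ℂ)
    (W : Type) [LieRing W] [LieAlgebra ℂ W] (B : Module.Basis (Γ × ℕ) ℂ W)
    (hB : ∀ (α β : Γ) (i j : ℕ),
      ⁅B (α, i), B (β, j)⁆ = ((β : ℂ) - (α : ℂ)) • B (α + β, i + j)
        + ((j : ℂ) - (i : ℂ)) • B (α + β, i + j + 1))
    (y : W) (φ : Γ →+ ℂ)
    -- `ad_y = D_φ`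
    (h : ∀ (α : Γ) (i : ℕ), ⁅y, B (α, i)⁆ = φ α • B (α, i)) :
    y = 0 ∧ φ = 0 := by
  have hy : y = 0 := IsWBasis.eq_zero_of_forall_lie_zero_left (B := B) hB fun i => by
    rw [← lie_skew, h, map_zero, zero_smul, neg_zero]
  refine ⟨hy, AddMonoidHom.ext fun α => ?_⟩
  have hα := h α 0
  rw [hy, zero_lie, eq_comm, smul_eq_zero] at hα
  exact hα.resolve_right (B.ne_zero _)

theorem stmt10 (Γ : AddSubgroup ℂ) (hΓ : Γ ≠ ⊥)
    (W : Type) [LieRing W] [LieAlgebra ℂ W] (B : Module.Basis (Γ × ℕ) ℂ W)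
    (hB : ∀ (α β : Γ) (i j : ℕ),
      ⁅B (α, i), B (β, j)⁆ = ((β : ℂ) - (α : ℂ)) • B (α + β, i + j)
        + ((j : ℂ) - (i : ℂ)) • B (α + β, i + j + 1))
    (y : W) (φ : Γ →+ ℂ)
    -- `ad_y = D_φ`
    (h : ∀ (α : Γ) (i : ℕ), ⁅y, B (α, i)⁆ = φ α • B (α, i)) :
    y = 0 ∧ φ = 0 :=
  stmt10_general Γ W B hB y φ h
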